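/- arXiv:1109.5845 — 2 statements merged into one kernel-verified Lean document; each statement's English description precedes it below -/
import Mathlib

section
/- Let X_1,...,X_n be independent Bernoulli random variables with success probabilities p_1,...,p_n ∈ (0,1). For k ∈ {0,...,n-1}, the quotient P(∑X_i ≥ k+1)/P(∑X_i ≥ k) is strictly increasing in each p_j (for fixed k) and strictly decreasing in k (for fixed p_1,...,p_n). -/
/-!
Write `T k = P(∑ X ≥ k)`. Conditioning on `X_j` expresses `T` as the mixture
`T k = p_j b (k - 1) + (1 - p_j) b k` of the tails `b` of the other variables, and then
`T (k + 1) / T k` is increasing in `p_j` exactly when `b (k - 1) b (k + 1) < b k ^ 2`. So both claims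
reduce to strict log-concavity of the tail sequence up to `k = n`. That property survives adding one
more trial: if consecutive tails `v ≥ w ≥ z ≥ 0` and `u` satisfy `u w < v²` and `v z ≤ w²`
(hence `u z ≤ v w`), then
`(t v + (1-t) w)² - (t u + (1-t) v)(t w + (1-t) z)
  = t² (v² - u w) + (1-t)² (w² - v z) + t (1-t) (v w - u z) > 0`,
so it follows by induction on `n`.
-/

open Finset
open scoped BigOperators Classical

noncomputable section

/-- Weight (probability) of a configuration `x` of `n` independent Bernoulli
variables with success probabilities `p i`. -/
def bw {n : ℕ} (p : Fin n → ℝ) (x : Fin n → Bool) : ℝ :=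
  ∏ i, if x i then p i else 1 - p i

/-- Probability of the event `A` for `n` independent Bernoulli variables. -/
def bpr {n : ℕ} (p : Fin n → ℝ) (A : (Fin n → Bool) → Prop) : ℝ :=
  ∑ x : Fin n → Bool, if A x then bw p x else 0

/-- Number of successes in the configuration `x`. -/
def cnt {n : ℕ} (x : Fin n → Bool) : ℕ := ∑ i, if x i then 1 else 0

/-- Conditional probability mass function given the event `A`. -/
def condPMF {n : ℕ} (p : Fin n → ℝ) (A : (Fin n → Bool) → Prop)
    (x : Fin n → Bool) : ℝ :=
  (if A x then bw p x else 0) / bpr p A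

/-- `dominates μ ν` : the law `μ` on `{0,1}^n` is stochastically dominated by `ν`,
i.e. there is a coupling supported on ordered pairs. -/
def dominates {n : ℕ} (μ ν : (Fin n → Bool) → ℝ) : Prop :=
  ∃ c : (Fin n → Bool) → (Fin n → Bool) → ℝ,
    (∀ x y, 0 ≤ c x y) ∧
    (∀ x, ∑ y : Fin n → Bool, c x y = μ x) ∧
    (∀ y, ∑ x : Fin n → Bool, c x y = ν y) ∧
    (∀ x y, c x y ≠ 0 → x ≤ y)

def tailProb {n : ℕ} (p : Fin n → ℝ) (k : ℕ) : ℝ :=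
  ∑ x : Fin n → Bool, if k ≤ cnt x then bw p x else 0

lemma bpr_le_cnt_eq {n : ℕ} (p : Fin n → ℝ) (k : ℕ) :
    bpr p (fun x => k ≤ cnt x) = tailProb p k := by
  simp only [bpr, tailProb]
  congr!

lemma mul_le_mul_of_sq_lt_of_sq_le {u v w z : ℝ} (hz : 0 ≤ z) (hzw : z ≤ w) (hwv : w ≤ v)
    (huw : u * w < v ^ 2) (hvz : v * z ≤ w ^ 2) : u * z ≤ v * w := by
  rcases (hz.trans hzw).eq_or_lt with hw | hw
  · obtain rfl : z = 0 := by linarith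
    simp [← hw]
  · have hvw : 0 < v * w := mul_pos (hw.trans_le hwv) hw
    have hvz0 : 0 ≤ v * z := mul_nonneg (hw.le.trans hwv) hz
    refine le_of_mul_le_mul_right ?_ hvw
    calc u * z * (v * w) = u * w * (v * z) := by ring
      _ ≤ v ^ 2 * w ^ 2 :=
        (mul_le_mul_of_nonneg_right huw.le hvz0).trans (mul_le_mul_of_nonneg_left hvz (sq_nonneg v))
      _ = v * w * (v * w) := by ring

lemma mix_mul_mix_lt_sq {t u v w z : ℝ} (ht0 : 0 < t) (ht1 : t ≤ 1) (hz : 0 ≤ z) (hzw : z ≤ w)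
    (hwv : w ≤ v) (huw : u * w < v ^ 2) (hvz : v * z ≤ w ^ 2) :
    (t * u + (1 - t) * v) * (t * w + (1 - t) * z) < (t * v + (1 - t) * w) ^ 2 := by
  have huz := mul_le_mul_of_sq_lt_of_sq_le hz hzw hwv huw hvz
  have h1 : 0 < t ^ 2 * (v ^ 2 - u * w) := by have := sub_pos.2 huw; positivity
  have h2 : 0 ≤ (1 - t) ^ 2 * (w ^ 2 - v * z) := by have := sub_nonneg.2 hvz; positivity
  have h3 : 0 ≤ t * (1 - t) * (v * w - u * z) := by
    have := sub_nonneg.2 huz; have := sub_nonneg.2 ht1; positivity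
  linear_combination h1 + h2 + h3

lemma mix_div_mix_lt {t t' a b c : ℝ} (ht : t < t') (hac : a * c < b ^ 2)
    (hd : 0 < t * a + (1 - t) * b) (hd' : 0 < t' * a + (1 - t') * b) :
    (t * b + (1 - t) * c) / (t * a + (1 - t) * b)
      < (t' * b + (1 - t') * c) / (t' * a + (1 - t') * b) := by
  rw [div_lt_div_iff₀ hd hd']
  linear_combination mul_pos (sub_pos.2 ht) (sub_pos.2 hac)

section Bernoulli

variable {n : ℕ} {p : Fin n → ℝ}

lemma bw_nonneg (hp : ∀ i, p i ∈ Set.Icc 0 1) (x : Fin n → Bool) : 0 ≤ bw p x :=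
  prod_nonneg fun i _ => by
    obtain ⟨h0, h1⟩ := hp i
    split <;> linarith

lemma cnt_le (x : Fin n → Bool) : cnt x ≤ n :=
  calc cnt x ≤ ∑ _i : Fin n, 1 := sum_le_sum fun i _ => by split <;> omega
    _ = n := by simp

lemma tailProb_nonneg (hp : ∀ i, p i ∈ Set.Icc 0 1) (k : ℕ) : 0 ≤ tailProb p k :=
  sum_nonneg fun x _ => by
    split
    · exact bw_nonneg hp x
    · exact le_rfl

lemma tailProb_succ_le (hp : ∀ i, p i ∈ Set.Icc 0 1) (k : ℕ) :
    tailProb p (k + 1) ≤ tailProb p k :=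
  sum_le_sum fun x _ => by
    by_cases h : k + 1 ≤ cnt x
    · rw [if_pos h, if_pos (by omega)]
    · rw [if_neg h]
      split
      · exact bw_nonneg hp x
      · exact le_rfl

lemma tailProb_eq_zero (p : Fin n → ℝ) {k : ℕ} (hk : n < k) : tailProb p k = 0 :=
  sum_eq_zero fun x _ => if_neg (by have := cnt_le x; omega)

lemma tailProb_pos (hp : ∀ i, p i ∈ Set.Ioc 0 1) {k : ℕ} (hk : k ≤ n) :
    0 < tailProb p k := by
  have hall : cnt (fun _ : Fin n => true) = n := by simp [cnt]
  calc 0 < bw p (fun _ => true) := prod_pos fun i _ => (hp i).1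
    _ = if k ≤ cnt (fun _ : Fin n => true) then bw p (fun _ => true) else 0 := by
      rw [if_pos (hall.symm ▸ hk)]
    _ ≤ tailProb p k :=
      single_le_sum (f := fun x => if k ≤ cnt x then bw p x else 0)
        (fun x _ => by
          split
          · exact bw_nonneg (fun i => Set.Ioc_subset_Icc_self (hp i)) x
          · exact le_rfl)
        (mem_univ _)

lemma cnt_insertNth (j : Fin (n + 1)) (b : Bool) (y : Fin n → Bool) :
    cnt (Fin.insertNth j b y) = (if b then 1 else 0) + cnt y := by
  simp [cnt, Fin.sum_univ_succAbove _ j]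

lemma bw_insertNth (p : Fin (n + 1) → ℝ) (j : Fin (n + 1)) (b : Bool) (y : Fin n → Bool) :
    bw p (Fin.insertNth j b y) = (if b then p j else 1 - p j) * bw (p ∘ j.succAbove) y := by
  simp [bw, Fin.prod_univ_succAbove _ j]

lemma tailProb_eq_mix (p : Fin (n + 1) → ℝ) (j : Fin (n + 1)) (k : ℕ) :
    tailProb p k =
      p j * tailProb (p ∘ j.succAbove) (k - 1) + (1 - p j) * tailProb (p ∘ j.succAbove) k := by
  rw [tailProb, ← (Fin.insertNthEquiv (fun _ => Bool) j).sum_comp, Fintype.sum_prod_type,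
    Fintype.sum_bool]
  simp only [Fin.insertNthEquiv, Equiv.coe_fn_mk, cnt_insertNth, bw_insertNth, tailProb, mul_sum,
    mul_ite, mul_zero, ↓reduceIte, Bool.false_eq_true, zero_add]
  congr 1
  exact sum_congr rfl fun y _ => if_congr (by omega) rfl rfl

lemma tailProb_zero (p : Fin n → ℝ) : tailProb p 0 = 1 := by
  induction n with
  | zero => simp [tailProb, bw]
  | succ m ih => rw [tailProb_eq_mix p 0, ih]; ring

end Bernoulli

/-- At `k = 0` the truncated `k - 1` turns this into `tailProb p 1 < tailProb p 0`. -/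
theorem tailProb_sq_gt : ∀ {n : ℕ} {p : Fin n → ℝ}, (∀ i, p i ∈ Set.Ioo 0 1) → ∀ k ≤ n,
    tailProb p (k - 1) * tailProb p (k + 1) < tailProb p k ^ 2
  | 0, p, _, k, hk => by
    obtain rfl : k = 0 := by omega
    simp [tailProb_zero, tailProb_eq_zero p zero_lt_one]
  | n + 1, p, hp, k, hk => by
    set q := p ∘ (0 : Fin (n + 1)).succAbove
    have hq : ∀ i, q i ∈ Set.Ioo 0 1 := fun i => hp _
    have hq' : ∀ i, q i ∈ Set.Icc 0 1 := fun i => Set.Ioo_subset_Icc_self (hq i)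
    have ih := tailProb_sq_gt hq
    have hmix := tailProb_eq_mix p 0
    obtain ⟨ht0, ht1⟩ := hp 0
    rcases k with _ | k
    · have hq1 : tailProb q 1 < 1 := by simpa [tailProb_zero] using ih 0 (Nat.zero_le n)
      rw [hmix 1, tailProb_zero, tailProb_zero]
      simp only [one_pow, one_mul, mul_one]
      nlinarith
    · have hweak : tailProb q k * tailProb q (k + 2) ≤ tailProb q (k + 1) ^ 2 := by
        rcases le_or_gt (k + 1) n with h | h
        · simpa using (ih (k + 1) h).le
        · rw [tailProb_eq_zero q (by omega : n < k + 2), mul_zero]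
          positivity
      rw [Nat.add_sub_cancel, hmix k, hmix (k + 1), hmix (k + 1 + 1), Nat.add_sub_cancel,
        Nat.add_sub_cancel]
      exact mix_mul_mix_lt_sq ht0 ht1.le (tailProb_nonneg hq' _) (tailProb_succ_le hq' _)
        (tailProb_succ_le hq' _) (ih k (by omega)) hweak

theorem tailProb_succ_div_lt_of_lt {n : ℕ} {p p' : Fin (n + 1) → ℝ} (hp : ∀ i, p i ∈ Set.Ioo 0 1)
    (hp' : ∀ i, p' i ∈ Set.Ioc 0 1) {j : Fin (n + 1)} (hne : ∀ i, i ≠ j → p' i = p i)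
    (hlt : p j < p' j) {k : ℕ} (hk : k ≤ n) :
    tailProb p (k + 1) / tailProb p k < tailProb p' (k + 1) / tailProb p' k := by
  have hrest : p' ∘ j.succAbove = p ∘ j.succAbove := funext fun i => hne _ (j.succAbove_ne i)
  have hd := tailProb_pos (fun i => Set.Ioo_subset_Ioc_self (hp i)) (k := k) (by omega)
  have hd' := tailProb_pos hp' (k := k) (by omega)
  simp only [tailProb_eq_mix p j, tailProb_eq_mix p' j, hrest, Nat.add_sub_cancel] at hd hd' ⊢
  exact mix_div_mix_lt hlt (tailProb_sq_gt (fun i => hp _) k hk) hd hd'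

theorem tailProb_succ_succ_div_lt {n : ℕ} {p : Fin n → ℝ} (hp : ∀ i, p i ∈ Set.Ioo 0 1) {k : ℕ}
    (hk : k + 1 ≤ n) :
    tailProb p (k + 2) / tailProb p (k + 1) < tailProb p (k + 1) / tailProb p k := by
  have hp' : ∀ i, p i ∈ Set.Ioc 0 1 := fun i => Set.Ioo_subset_Ioc_self (hp i)
  rw [div_lt_div_iff₀ (tailProb_pos hp' hk) (tailProb_pos hp' (by omega)), ← sq]
  simpa [mul_comm] using tailProb_sq_gt hp (k + 1) hk

/-- the quotient `P(∑X ≥ k+1)/P(∑X ≥ k)` is strictly increasing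
in each `p j` (for fixed `k`) and strictly decreasing in `k`. -/
theorem stmt2 {n : ℕ} (p : Fin n → ℝ) (hp : ∀ i, 0 < p i ∧ p i < 1) :
    (∀ (k : ℕ), k ≤ n - 1 →
      ∀ (j : Fin n) (p' : Fin n → ℝ), (∀ i, 0 < p' i ∧ p' i < 1) →
        (∀ i, i ≠ j → p' i = p i) → p j < p' j →
        bpr p (fun x => k + 1 ≤ cnt x) / bpr p (fun x => k ≤ cnt x)
          < bpr p' (fun x => k + 1 ≤ cnt x) / bpr p' (fun x => k ≤ cnt x)) ∧
    (∀ (k : ℕ), k + 1 ≤ n - 1 →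
      bpr p (fun x => k + 2 ≤ cnt x) / bpr p (fun x => k + 1 ≤ cnt x)
        < bpr p (fun x => k + 1 ≤ cnt x) / bpr p (fun x => k ≤ cnt x)) := by
  simp only [bpr_le_cnt_eq]
  refine ⟨fun k hk j p' hp' hne hlt => ?_, fun k hk => tailProb_succ_succ_div_lt hp (by omega)⟩
  obtain ⟨m, rfl⟩ : ∃ m, n = m + 1 := ⟨n - 1, by have := j.pos; omega⟩
  exact tailProb_succ_div_lt_of_lt hp (fun i => Set.Ioo_subset_Ioc_self (hp' i)) hne hlt
    (by omega)
end
end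

section
/- Let X ~ Bin(m, p) with p ∈ (0,1). For every real u with 0 < u < (1-p)m, every positive integer t, and every integer m' with p·m + u ≤ m' ≤ m, one has P(X = m' + t) ≤ exp(−ut/m)·P(X = m'). -/
open Finset
open scoped BigOperators Classical

noncomputable section

/-- Probability mass function of a binomial random variable with parameters `m`, `p`. -/
def binomPMF (m : ℕ) (p : ℝ) (j : ℕ) : ℝ :=
  (m.choose j : ℝ) * p ^ j * (1 - p) ^ (m - j)

/-- Probability that independent binomials `X i ~ Bin(m i, p i)` realize an event `A`. -/
def jointPr {M : ℕ} (m : Fin M → ℕ) (p : Fin M → ℝ) (A : (Fin M → ℕ) → Prop) : ℝ :=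
  ∑ ℓ ∈ Fintype.piFinset (fun i => Finset.range (m i + 1)),
    if A ℓ then ∏ i, binomPMF (m i) (p i) (ℓ i) else 0

/-!
Consecutive binomial probabilities satisfy
`P(X = j+1) (j+1)(1-p) = P(X = j) (m-j) p`, and for `j ≥ pm + u` the resulting ratio
`(m-j)p / ((j+1)(1-p))` is at most `1 - u/m ≤ exp(-u/m)`. Iterating this one-step decay
`t` times from `m'` gives the factor `exp(-ut/m)`.
-/

lemma binomPMF_nonneg {m : ℕ} {p : ℝ} (hp₀ : 0 ≤ p) (hp₁ : p ≤ 1) (j : ℕ) :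
    0 ≤ binomPMF m p j := by
  have : 0 ≤ 1 - p := sub_nonneg.2 hp₁
  unfold binomPMF
  positivity

lemma binomPMF_eq_zero_of_lt {m j : ℕ} (p : ℝ) (h : m < j) : binomPMF m p j = 0 := by
  simp [binomPMF, Nat.choose_eq_zero_of_lt h]

lemma binomPMF_succ_mul (m : ℕ) (p : ℝ) (j : ℕ) :
    binomPMF m p (j + 1) * ((j + 1) * (1 - p)) = binomPMF m p j * ((m - j) * p) := by
  rcases lt_or_ge j m with hjm | hmj
  · have hchoose : (m.choose (j + 1) : ℝ) * (j + 1) = m.choose j * (m - j) := by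
      have := congrArg (Nat.cast : ℕ → ℝ) (Nat.choose_succ_right_eq m j)
      push_cast [Nat.cast_sub hjm.le] at this
      exact this
    have hexp : m - j = (m - (j + 1)) + 1 := by omega
    simp only [binomPMF, hexp, pow_succ]
    linear_combination p ^ j * p * (1 - p) ^ (m - (j + 1)) * (1 - p) * hchoose
  · rw [binomPMF_eq_zero_of_lt p (Nat.lt_succ_of_le hmj)]
    rcases hmj.eq_or_lt with rfl | hlt
    · ring
    · rw [binomPMF_eq_zero_of_lt p hlt]
      ring

lemma binomPMF_succ_le_mul_of_ratio_le {m j : ℕ} {p c : ℝ} (hp₀ : 0 ≤ p) (hp₁ : p < 1)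
    (h : (m - j) * p ≤ c * ((j + 1) * (1 - p))) :
    binomPMF m p (j + 1) ≤ c * binomPMF m p j := by
  have hpos : 0 < ((j : ℝ) + 1) * (1 - p) := by
    have : 0 < 1 - p := sub_pos.2 hp₁
    positivity
  refine le_of_mul_le_mul_right ?_ hpos
  calc binomPMF m p (j + 1) * ((j + 1) * (1 - p))
      = binomPMF m p j * ((m - j) * p) := binomPMF_succ_mul m p j
    _ ≤ binomPMF m p j * (c * ((j + 1) * (1 - p))) :=
      mul_le_mul_of_nonneg_left h (binomPMF_nonneg hp₀ hp₁.le j)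
    _ = c * binomPMF m p j * ((j + 1) * (1 - p)) := by ring

lemma binomPMF_succ_le_exp_mul {m j : ℕ} {p u : ℝ} (hp₀ : 0 ≤ p) (hp₁ : p < 1) (hu₀ : 0 < u)
    (hu : u ≤ (1 - p) * m) (hj : p * m + u ≤ j) :
    binomPMF m p (j + 1) ≤ Real.exp (-u / m) * binomPMF m p j := by
  have hm : 0 < (m : ℝ) := by nlinarith
  have hratio : (m - j) * p ≤ (1 - u / m) * ((j + 1) * (1 - p)) := by
    rw [one_sub_div hm.ne', div_mul_eq_mul_div, le_div_iff₀ hm]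
    calc (m - j) * p * m ≤ ((1 - p) * m - u) * p * m :=
          mul_le_mul_of_nonneg_right (mul_le_mul_of_nonneg_right (by linarith) hp₀) hm.le
      -- the difference is `(1 - p) u ((1 - p) m - u) + p u m ≥ 0`
      _ ≤ (m - u) * ((p * m + u) * (1 - p)) := by
        nlinarith [mul_nonneg (mul_nonneg (sub_nonneg.2 hp₁.le) hu₀.le) (sub_nonneg.2 hu),
          mul_nonneg (mul_nonneg hp₀ hu₀.le) hm.le]
      _ ≤ (m - u) * ((j + 1) * (1 - p)) :=
          mul_le_mul_of_nonneg_left (mul_le_mul_of_nonneg_right (by linarith) (by linarith))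
            (by nlinarith)
  calc binomPMF m p (j + 1) ≤ (1 - u / m) * binomPMF m p j :=
        binomPMF_succ_le_mul_of_ratio_le hp₀ hp₁ hratio
    _ ≤ Real.exp (-u / m) * binomPMF m p j := by
        gcongr
        · exact binomPMF_nonneg hp₀ hp₁.le j
        · rw [neg_div]
          exact Real.one_sub_le_exp_neg _

lemma le_pow_mul_of_succ_le {f : ℕ → ℝ} {c : ℝ} (hc : 0 ≤ c) {j₀ : ℕ}
    (h : ∀ j, j₀ ≤ j → f (j + 1) ≤ c * f j) (t : ℕ) : f (j₀ + t) ≤ c ^ t * f j₀ := by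
  induction t with
  | zero => simp
  | succ t ih =>
    calc f (j₀ + (t + 1)) ≤ c * f (j₀ + t) := h _ (Nat.le_add_right j₀ t)
      _ ≤ c * (c ^ t * f j₀) := mul_le_mul_of_nonneg_left ih hc
      _ = c ^ (t + 1) * f j₀ := by ring

theorem stmt13_general (m : ℕ) (p : ℝ) (hp : 0 < p ∧ p < 1)
    (u : ℝ) (hu : 0 < u ∧ u < (1 - p) * m)
    (t : ℕ) (m' : ℕ)
    (h1 : p * m + u ≤ (m' : ℝ)) :
    binomPMF m p (m' + t) ≤ Real.exp (-(u * t) / m) * binomPMF m p m' := by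
  have hstep : ∀ j, m' ≤ j → binomPMF m p (j + 1) ≤ Real.exp (-u / m) * binomPMF m p j :=
    fun j hj => binomPMF_succ_le_exp_mul hp.1.le hp.2 hu.1 hu.2.le
      (h1.trans (Nat.cast_le.2 hj))
  calc binomPMF m p (m' + t) ≤ Real.exp (-u / m) ^ t * binomPMF m p m' :=
        le_pow_mul_of_succ_le (Real.exp_nonneg _) hstep t
    _ = Real.exp (-(u * t) / m) * binomPMF m p m' := by
        rw [← Real.exp_nat_mul]
        ring_nf

/-- for `X ~ Bin(m,p)`, `0 < u < (1-p)m`, a positive integer `t` and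
`m'` with `p·m + u ≤ m' ≤ m`, one has `P(X = m'+t) ≤ exp(−ut/m)·P(X = m')`. -/
theorem stmt13 (m : ℕ) (p : ℝ) (hp : 0 < p ∧ p < 1)
    (u : ℝ) (hu : 0 < u ∧ u < (1 - p) * m)
    (t : ℕ) (ht : 0 < t) (m' : ℕ)
    (h1 : p * m + u ≤ (m' : ℝ)) (h2 : m' ≤ m) :
    binomPMF m p (m' + t) ≤ Real.exp (-(u * t) / m) * binomPMF m p m' :=
  stmt13_general m p hp u hu t m' h1
end
end
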